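/- arXiv:1901.03240 — 9 statements merged into one kernel-verified Lean document; each statement's English description precedes it below -/
import Mathlib

section
/- For d ≥ 1, the odd parity polytope P_{d,odd} := conv{x ∈ {0,1}^d : Σᵢ xᵢ is odd} equals the set {x ∈ [0,1]^d : Σ_{i∈V} xᵢ - Σ_{i∉V} xᵢ ≤ |V| - 1 for all V ⊆ {1,…,d} with |V| even}. -/
open Finset

/-- Squared Euclidean distance on `Fin d → ℝ`. -/
noncomputable def sqdist {d : ℕ} (x y : Fin d → ℝ) : ℝ := ∑ i, (x i - y i) ^ 2

/-- `z` is the Euclidean (nearest-point) projection of `x` onto `S`. -/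
def IsProj {d : ℕ} (S : Set (Fin d → ℝ)) (x z : Fin d → ℝ) : Prop :=
  z ∈ S ∧ ∀ y ∈ S, sqdist x z ≤ sqdist x y

/-- The even parity polytope: convex hull of 0/1 vectors with an even number of ones. -/
noncomputable def PEven (d : ℕ) : Set (Fin d → ℝ) :=
  convexHull ℝ {x | ∃ S : Finset (Fin d), Even S.card ∧ ∀ i, x i = if i ∈ S then 1 else 0}

/-- The odd parity polytope: convex hull of 0/1 vectors with an odd number of ones. -/
noncomputable def POdd (d : ℕ) : Set (Fin d → ℝ) :=
  convexHull ℝ {x | ∃ S : Finset (Fin d), Odd S.card ∧ ∀ i, x i = if i ∈ S then 1 else 0}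

/-!
Each forbidden-set inequality holds at the odd vertices: for `S` odd and `V` even, either `S ⊄ V`,
and a coordinate outside `V` pays for the `-1`, or `S ⊊ V` by parity.

Conversely, by Hahn–Banach it suffices that for `x` in the relaxation every linear functional
`∑ cᵢ xᵢ` is at most its value at some odd vertex. Let `P = {i | 0 < cᵢ}`. If `|P|` is odd, the
indicator of `P` works since `x ∈ [0,1]ᵈ`. If `|P|` is even, the forbidden-set inequality of `P`
says that its slack `|P| - ∑_P xᵢ + ∑_{Pᶜ} xᵢ` is at least `1`, which yields
`∑ cᵢ xᵢ ≤ ∑_P cᵢ - minⱼ |cⱼ|`; toggling a coordinate `j` of least `|cⱼ|` in `P` gives an odd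
set attaining exactly this bound.
-/

theorem mem_convexHull_of_forall_exists_le {E : Type*} [AddCommGroup E] [Module ℝ E]
    [TopologicalSpace E] [IsTopologicalAddGroup E] [ContinuousSMul ℝ E] [LocallyConvexSpace ℝ E]
    [T2Space E] {s : Set E} (hs : s.Finite) {x : E}
    (h : ∀ f : StrongDual ℝ E, ∃ v ∈ s, f x ≤ f v) : x ∈ convexHull ℝ s := by
  by_contra hx
  obtain ⟨f, u, hfs, hfx⟩ :=
    geometric_hahn_banach_closed_point (convex_convexHull ℝ s) (hs.isClosed_convexHull ℝ) hx
  obtain ⟨v, hv, hxv⟩ := h f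
  exact (hfs v (subset_convexHull ℝ s hv)).not_gt (hfx.trans_le hxv)

theorem Finset.card_inter_add_one_le_card_add_card_sdiff {α : Type*} [DecidableEq α]
    {S V : Finset α} (hS : Odd #S) (hV : Even #V) : #(S ∩ V) + 1 ≤ #V + #(S \ V) := by
  by_cases hSV : S ⊆ V
  · have hne : S ≠ V := by
      rintro rfl
      exact Nat.not_even_iff_odd.2 hS hV
    rw [inter_eq_left.2 hSV, sdiff_eq_empty_iff_subset.2 hSV, card_empty]
    exact card_lt_card (hSV.ssubset_of_ne hne)
  · have hout : 0 < #(S \ V) := card_pos.2 (sdiff_nonempty.2 hSV)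
    have hin : #(S ∩ V) ≤ #V := card_le_card inter_subset_right
    omega

def oddParityVertices (ι : Type*) [DecidableEq ι] : Set (ι → ℝ) :=
  {x | ∃ S : Finset ι, Odd #S ∧ ∀ i, x i = if i ∈ S then 1 else 0}

def forbiddenSetPolytope (ι : Type*) [Fintype ι] [DecidableEq ι] : Set (ι → ℝ) :=
  {x | (∀ i, 0 ≤ x i ∧ x i ≤ 1) ∧
    ∀ V : Finset ι, Even #V → ∑ i ∈ V, x i - ∑ i ∈ Vᶜ, x i ≤ (#V : ℝ) - 1}

section ParityPolytope

variable {ι : Type*} [DecidableEq ι]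

theorem finite_oddParityVertices [Finite ι] : (oddParityVertices ι).Finite :=
  (Set.finite_range fun S : Finset ι => fun i => if i ∈ S then (1 : ℝ) else 0).subset
    fun _ ⟨S, _, hx⟩ => ⟨S, funext fun i => (hx i).symm⟩

theorem exists_odd_card_sum_eq_sum_sub_abs {c : ι → ℝ} {P : Finset ι} (hP : Even #P) (j : ι)
    (hj : j ∈ P ↔ 0 < c j) : ∃ S : Finset ι, Odd #S ∧ ∑ i ∈ S, c i = ∑ i ∈ P, c i - |c j| := by
  by_cases hjP : j ∈ P
  · refine ⟨P.erase j, ?_, ?_⟩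
    · rw [card_erase_of_mem hjP]
      exact Nat.Even.sub_odd (card_pos.2 ⟨j, hjP⟩) hP odd_one
    · rw [← sum_erase_add _ _ hjP, abs_of_pos (hj.1 hjP)]
      ring
  · refine ⟨insert j P, ?_, ?_⟩
    · rw [card_insert_of_notMem hjP]
      exact hP.add_one
    · rw [sum_insert hjP, abs_of_nonpos (not_lt.1 (mt hj.2 hjP))]
      ring

variable [Fintype ι]

theorem oddParityVertices_subset_forbiddenSetPolytope :
    oddParityVertices ι ⊆ forbiddenSetPolytope ι := by
  rintro x ⟨S, hS, hx⟩
  obtain rfl : x = fun i => if i ∈ S then 1 else 0 := funext hx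
  refine ⟨fun i => by dsimp only; split_ifs <;> norm_num, fun V hV => ?_⟩
  have hcard := card_inter_add_one_le_card_add_card_sdiff hS hV
  simp only [sum_boole, filter_mem_eq_inter, inter_comm _ S, ← sdiff_eq_inter_compl]
  have : (#(S ∩ V) : ℝ) + 1 ≤ #V + #(S \ V) := by exact_mod_cast hcard
  linarith

theorem convex_forbiddenSetPolytope : Convex ℝ (forbiddenSetPolytope ι) := by
  intro x hx y hy a b ha hb hab
  refine ⟨fun i => convex_Icc (0 : ℝ) 1 (hx.1 i) (hy.1 i) ha hb hab, fun V hV => ?_⟩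
  have hxV := hx.2 V hV
  have hyV := hy.2 V hV
  simp only [Pi.add_apply, Pi.smul_apply, smul_eq_mul, sum_add_distrib, ← mul_sum]
  nlinarith

theorem sum_mul_le_sum_sub_mul {c x : ι → ℝ} (hx : ∀ i, 0 ≤ x i ∧ x i ≤ 1) (P : Finset ι)
    (μ : ℝ) (hP : ∀ i ∈ P, μ ≤ c i) (hPc : ∀ i ∉ P, c i ≤ -μ) :
    ∑ i, c i * x i ≤ ∑ i ∈ P, c i - μ * (#P - ∑ i ∈ P, x i + ∑ i ∈ Pᶜ, x i) := by
  have hin : ∑ i ∈ P, c i * x i ≤ ∑ i ∈ P, (c i - μ * (1 - x i)) :=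
    sum_le_sum fun i hi => by nlinarith [hP i hi, hx i]
  have hout : ∑ i ∈ Pᶜ, c i * x i ≤ ∑ i ∈ Pᶜ, -μ * x i :=
    sum_le_sum fun i hi => by nlinarith [hPc i (mem_compl.1 hi), hx i]
  rw [← sum_add_sum_compl P]
  simp only [sum_sub_distrib, ← mul_sum, sum_const, nsmul_eq_mul, mul_one] at hin hout
  linarith

theorem exists_odd_card_sum_mul_le (c : ι → ℝ) {x : ι → ℝ} (hx : x ∈ forbiddenSetPolytope ι) :
    ∃ S : Finset ι, Odd #S ∧ ∑ i, c i * x i ≤ ∑ i ∈ S, c i := by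
  set P : Finset ι := {i | 0 < c i}
  have hmem : ∀ i, i ∈ P ↔ 0 < c i := by simp [P]
  rcases Nat.even_or_odd #P with heven | hodd
  · have hgap : 1 ≤ (#P : ℝ) - ∑ i ∈ P, x i + ∑ i ∈ Pᶜ, x i := by linarith [hx.2 P heven]
    have hne : (univ : Finset ι).Nonempty := by
      refine univ_nonempty_iff.2 (not_isEmpty_iff.1 fun _ => ?_)
      norm_num [eq_empty_of_isEmpty] at hgap
    obtain ⟨j, -, hj⟩ := exists_min_image univ (fun i => |c i|) hne
    obtain ⟨S, hS, hsum⟩ := exists_odd_card_sum_eq_sum_sub_abs heven j (hmem j)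
    have hbound := sum_mul_le_sum_sub_mul hx.1 P |c j|
      (fun i hi => (hj i (mem_univ i)).trans (abs_of_pos ((hmem i).1 hi)).le)
      (fun i hi => by
        have := hj i (mem_univ i)
        rw [abs_of_nonpos (not_lt.1 (mt (hmem i).2 hi))] at this
        linarith)
    refine ⟨S, hS, ?_⟩
    nlinarith [abs_nonneg (c j)]
  · refine ⟨P, hodd, ?_⟩
    simpa using sum_mul_le_sum_sub_mul hx.1 P 0 (fun i hi => ((hmem i).1 hi).le)
      (fun i hi => by simpa using mt (hmem i).2 hi)

theorem exists_mem_oddParityVertices_apply_le (f : (ι → ℝ) →ₗ[ℝ] ℝ) {x : ι → ℝ}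
    (hx : x ∈ forbiddenSetPolytope ι) : ∃ v ∈ oddParityVertices ι, f x ≤ f v := by
  obtain ⟨S, hS, hle⟩ := exists_odd_card_sum_mul_le (fun i => f fun j => if i = j then 1 else 0) hx
  refine ⟨_, ⟨S, hS, fun _ => rfl⟩, ?_⟩
  rw [f.pi_apply_eq_sum_univ x, f.pi_apply_eq_sum_univ]
  simpa [mul_comm] using hle

end ParityPolytope

theorem odd_parity_polytope_description_general (d : ℕ) :
    POdd d = {x : Fin d → ℝ | (∀ i, 0 ≤ x i ∧ x i ≤ 1) ∧
      ∀ V : Finset (Fin d), Even V.card →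
        ∑ i ∈ V, x i - ∑ i ∈ Vᶜ, x i ≤ (V.card : ℝ) - 1} := by
  refine (convexHull_min oddParityVertices_subset_forbiddenSetPolytope
    convex_forbiddenSetPolytope).antisymm fun x hx => ?_
  exact mem_convexHull_of_forall_exists_le finite_oddParityVertices fun f =>
    exists_mem_oddParityVertices_apply_le (f : (Fin d → ℝ) →ₗ[ℝ] ℝ) hx

theorem odd_parity_polytope_description (d : ℕ) (hd : 1 ≤ d) :
    POdd d = {x : Fin d → ℝ | (∀ i, 0 ≤ x i ∧ x i ≤ 1) ∧
      ∀ V : Finset (Fin d), Even V.card →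
        ∑ i ∈ V, x i - ∑ i ∈ Vᶜ, x i ≤ (V.card : ℝ) - 1} :=
  odd_parity_polytope_description_general d
end

section
/- For d ≥ 1, the even parity polytope P_{d,even} := conv{x ∈ {0,1}^d : Σᵢ xᵢ is even} equals the set {x ∈ [0,1]^d : Σ_{i∈V} xᵢ - Σ_{i∉V} xᵢ ≤ |V| - 1 for all V ⊆ {1,…,d} with |V| odd}. -/
open Finset

/-!
Both sides are compact convex sets, and the even 0/1 vectors satisfy every odd-set inequality,
so by Krein–Milman it suffices to show that every extreme point `x` of the right-hand side is
integral. Write the odd-set inequality for `V` as `∑ᵢ sᵢ ≥ 1` with nonnegative per-coordinate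
slacks `sᵢ`. If two distinct odd sets are tight at `x`, their symmetric difference is even and
nonempty, and adding the two slack sums shows that it contains every fractional coordinate. If
`x j` is fractional and some odd set `V₀` is tight, its slack sum forces a second fractional
coordinate `k`, and moving along `e_j ± e_k` with the sign dictated by `V₀` keeps every tight
set tight; if no odd set is tight, moving along `e_j` works. Either way `x` is the midpoint of a
nontrivial segment in the polytope.
-/

open Filter Topology

theorem Finset.card_symmDiff_add_two_mul_card_inter {α : Type*} [DecidableEq α]
    (s t : Finset α) : #(symmDiff s t) + 2 * #(s ∩ t) = #s + #t := by
  rw [symmDiff_eq_sup_sdiff_inf, sup_eq_union, inf_eq_inter,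
    card_sdiff_of_subset inter_subset_union, ← card_union_add_card_inter s t]
  have := card_le_card (inter_subset_union (s := s) (t := t))
  omega

theorem Finset.even_card_symmDiff_iff {α : Type*} [DecidableEq α] (s t : Finset α) :
    Even #(symmDiff s t) ↔ (Even #s ↔ Even #t) := by
  have := card_symmDiff_add_two_mul_card_inter s t
  simp only [Nat.even_iff]
  omega

section ParityPolytope

variable {ι : Type*} [DecidableEq ι]

def evenVertices (ι : Type*) [DecidableEq ι] : Set (ι → ℝ) :=
  {x | ∃ S : Finset ι, Even #S ∧ ∀ i, x i = if i ∈ S then 1 else 0}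

def oddSetPolytope (ι : Type*) [Fintype ι] [DecidableEq ι] : Set (ι → ℝ) :=
  {x | (∀ i, 0 ≤ x i ∧ x i ≤ 1) ∧
    ∀ V : Finset ι, Odd #V → ∑ i ∈ V, x i - ∑ i ∈ Vᶜ, x i ≤ (#V : ℝ) - 1}

def coordSlack (x : ι → ℝ) (V : Finset ι) (i : ι) : ℝ :=
  if i ∈ V then 1 - x i else x i

def oddSetSign (V : Finset ι) (i : ι) : ℝ :=
  if i ∈ V then -1 else 1

theorem coordSlack_nonneg {x : ι → ℝ} {i : ι} (hx : 0 ≤ x i ∧ x i ≤ 1) (V : Finset ι) :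
    0 ≤ coordSlack x V i := by
  unfold coordSlack
  split_ifs <;> linarith [hx.1, hx.2]

theorem coordSlack_mem_Ioo_iff {x : ι → ℝ} {V : Finset ι} {i : ι} :
    coordSlack x V i ∈ Set.Ioo 0 1 ↔ x i ∈ Set.Ioo 0 1 := by
  unfold coordSlack
  split_ifs
  · simp only [Set.mem_Ioo]
    constructor <;> rintro ⟨h₀, h₁⟩ <;> constructor <;> linarith
  · rfl

theorem oddSetSign_of_mem_symmDiff {V W : Finset ι} {i : ι} (h : i ∈ symmDiff V W) :
    oddSetSign V i = -oddSetSign W i := by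
  rw [mem_symmDiff] at h
  rcases h with ⟨hV, hW⟩ | ⟨hW, hV⟩ <;> simp [oddSetSign, hV, hW]

variable [Fintype ι]

def oddSetSlack (x : ι → ℝ) (V : Finset ι) : ℝ :=
  ∑ i, coordSlack x V i

theorem oddSetSlack_eq (x : ι → ℝ) (V : Finset ι) :
    oddSetSlack x V = #V - (∑ i ∈ V, x i - ∑ i ∈ Vᶜ, x i) := by
  rw [oddSetSlack, ← sum_add_sum_compl V]
  simp only [coordSlack]
  rw [sum_congr rfl fun i hi => if_pos hi,
    sum_congr rfl fun i hi => if_neg (mem_compl.1 hi), sum_sub_distrib, sum_const, nsmul_one]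
  ring

theorem mem_oddSetPolytope_iff {x : ι → ℝ} :
    x ∈ oddSetPolytope ι ↔
      (∀ i, 0 ≤ x i ∧ x i ≤ 1) ∧ ∀ V : Finset ι, Odd #V → 1 ≤ oddSetSlack x V := by
  simp only [oddSetPolytope, Set.mem_ofPred_eq, oddSetSlack_eq]
  refine and_congr_right fun _ => forall₂_congr fun V _ => ?_
  constructor <;> intro h <;> linarith

theorem oddSetSlack_add_smul (x u : ι → ℝ) (s : ℝ) (V : Finset ι) :
    oddSetSlack (x + s • u) V = oddSetSlack x V + s * ∑ i, oddSetSign V i * u i := by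
  simp only [oddSetSlack, coordSlack, oddSetSign, mul_sum, ← sum_add_distrib]
  refine sum_congr rfl fun i _ => ?_
  simp only [Pi.add_apply, Pi.smul_apply, smul_eq_mul]
  split_ifs <;> ring

theorem oddSetSlack_indicator (S V : Finset ι) :
    oddSetSlack (fun i => if i ∈ S then 1 else 0) V = #(symmDiff V S) := by
  have hterm : ∀ i, coordSlack (fun i => if i ∈ S then (1 : ℝ) else 0) V i =
      if i ∈ symmDiff V S then 1 else 0 := by
    intro i
    simp only [coordSlack, mem_symmDiff]
    by_cases hV : i ∈ V <;> by_cases hS : i ∈ S <;> simp [hV, hS]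
  simp only [oddSetSlack, hterm, sum_boole, filter_mem_eq_inter, univ_inter]

theorem evenVertices_subset_oddSetPolytope : evenVertices ι ⊆ oddSetPolytope ι := by
  rintro x ⟨S, hS, hx⟩
  obtain rfl : x = fun i => if i ∈ S then 1 else 0 := funext hx
  refine mem_oddSetPolytope_iff.2 ⟨fun i => by split_ifs <;> norm_num, fun V hV => ?_⟩
  have hne : #(symmDiff V S) ≠ 0 := fun h =>
    Nat.not_even_iff_odd.2 hV (((even_card_symmDiff_iff V S).1 (h ▸ .zero)).2 hS)
  rw [oddSetSlack_indicator]
  exact_mod_cast Nat.one_le_iff_ne_zero.2 hne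

theorem finite_evenVertices : (evenVertices ι).Finite :=
  (Set.finite_range fun S : Finset ι => fun i => if i ∈ S then (1 : ℝ) else 0).subset
    fun _ ⟨S, _, hx⟩ => ⟨S, funext fun i => (hx i).symm⟩

theorem convex_oddSetPolytope : Convex ℝ (oddSetPolytope ι) := by
  intro y hy z hz a b ha hb hab
  refine ⟨fun i => ?_, fun V hV => ?_⟩
  · have := hy.1 i
    have := hz.1 i
    simp only [Pi.add_apply, Pi.smul_apply, smul_eq_mul]
    constructor <;> nlinarith
  · have := hy.2 V hV
    have := hz.2 V hV
    simp only [Pi.add_apply, Pi.smul_apply, smul_eq_mul, sum_add_distrib, ← mul_sum]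
    nlinarith

theorem isCompact_oddSetPolytope : IsCompact (oddSetPolytope ι) := by
  refine (isCompact_univ_pi fun _ => isCompact_Icc (a := (0 : ℝ)) (b := 1)).of_isClosed_subset
    ?_ fun x hx i _ => hx.1 i
  simp only [oddSetPolytope, Set.ofPred_and, Set.ofPred_forall]
  exact (isClosed_iInter fun i => (isClosed_le continuous_const (continuous_apply i)).inter
      (isClosed_le (continuous_apply i) continuous_const)).inter
    (isClosed_iInter fun V => isClosed_iInter fun _ => isClosed_le (by fun_prop) continuous_const)

theorem mem_symmDiff_of_oddSetSlack_eq_one {x : ι → ℝ} (hbox : ∀ i, 0 ≤ x i ∧ x i ≤ 1)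
    {V₁ V₂ : Finset ι} (h₁ : Odd #V₁) (h₂ : Odd #V₂) (hne : V₁ ≠ V₂)
    (e₁ : oddSetSlack x V₁ = 1) (e₂ : oddSetSlack x V₂ = 1) {i : ι} (hi : x i ∈ Set.Ioo 0 1) :
    i ∈ symmDiff V₁ V₂ := by
  set D := symmDiff V₁ V₂
  by_contra hiD
  have hD : (2 : ℝ) ≤ #D := by
    have heven : Even #D := (even_card_symmDiff_iff V₁ V₂).2 <|
      iff_of_false (Nat.not_even_iff_odd.2 h₁) (Nat.not_even_iff_odd.2 h₂)
    have hD0 : #D ≠ 0 := by simpa [D, symmDiff_eq_bot] using hne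
    obtain ⟨m, hm⟩ := heven
    exact_mod_cast (by omega : 2 ≤ #D)
  -- on `D` exactly one of the two slacks is `1 - x j` and the other `x j`
  have hsumD : ∑ j ∈ D, (coordSlack x V₁ j + coordSlack x V₂ j) = #D := by
    rw [sum_congr rfl fun j hj => ?_, sum_const, nsmul_one]
    rcases mem_symmDiff.1 hj with ⟨h, h'⟩ | ⟨h, h'⟩ <;> simp [coordSlack, h, h']
  have hle : ∑ j ∈ insert i D, (coordSlack x V₁ j + coordSlack x V₂ j) ≤
      ∑ j, (coordSlack x V₁ j + coordSlack x V₂ j) :=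
    sum_le_sum_of_subset_of_nonneg (subset_univ _) fun j _ _ =>
      add_nonneg (coordSlack_nonneg (hbox j) V₁) (coordSlack_nonneg (hbox j) V₂)
  rw [sum_insert hiD, hsumD, sum_add_distrib] at hle
  have hpos₁ := (coordSlack_mem_Ioo_iff (V := V₁)).2 hi
  have hpos₂ := (coordSlack_mem_Ioo_iff (V := V₂)).2 hi
  simp only [oddSetSlack] at e₁ e₂
  linarith [hpos₁.1, hpos₂.1]

theorem exists_ne_mem_Ioo_of_oddSetSlack_eq_one {x : ι → ℝ} (hbox : ∀ i, 0 ≤ x i ∧ x i ≤ 1)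
    {V : Finset ι} (e : oddSetSlack x V = 1) {j : ι} (hj : x j ∈ Set.Ioo 0 1) :
    ∃ k ≠ j, x k ∈ Set.Ioo 0 1 := by
  have hsj := (coordSlack_mem_Ioo_iff (V := V)).2 hj
  have hrest : ∑ k ∈ univ.erase j, coordSlack x V k = 1 - coordSlack x V j := by
    rw [← e, oddSetSlack, ← add_sum_erase _ _ (mem_univ j)]
    ring
  obtain ⟨k, hk, hkpos⟩ : ∃ k ∈ univ.erase j, 0 < coordSlack x V k :=
    exists_lt_of_sum_lt (by simpa [hrest] using hsj.2)
  have hk_le : coordSlack x V k ≤ 1 - coordSlack x V j :=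
    hrest ▸ single_le_sum (fun k _ => coordSlack_nonneg (hbox k) V) hk
  exact ⟨k, ne_of_mem_erase hk, coordSlack_mem_Ioo_iff.1 ⟨hkpos, by linarith [hsj.1]⟩⟩

theorem eventually_le_add_mul {a b c : ℝ} (h : c ≤ a) (hb : b ≠ 0 → c < a) :
    ∀ᶠ s in 𝓝 (0 : ℝ), c ≤ a + s * b := by
  rcases eq_or_ne b 0 with rfl | hb0
  · exact .of_forall fun s => by simpa using h
  · have hcont : Continuous fun s : ℝ => a + s * b := by fun_prop
    exact ((hcont.tendsto' 0 a (by simp)).eventually_const_lt (hb hb0)).mono fun _ => le_of_lt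

theorem eventually_add_smul_mem_oddSetPolytope {x u : ι → ℝ} (hx : x ∈ oddSetPolytope ι)
    (hu : ∀ i, u i ≠ 0 → x i ∈ Set.Ioo 0 1)
    (htight : ∀ V : Finset ι, Odd #V → oddSetSlack x V = 1 → ∑ i, oddSetSign V i * u i = 0) :
    ∀ᶠ s in 𝓝 (0 : ℝ), x + s • u ∈ oddSetPolytope ι := by
  rw [mem_oddSetPolytope_iff] at hx
  have hbox : ∀ i, ∀ᶠ s in 𝓝 (0 : ℝ), 0 ≤ x i + s * u i ∧ x i + s * u i ≤ 1 := fun i =>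
    (eventually_le_add_mul (hx.1 i).1 fun h => (hu i h).1).and <|
      (eventually_le_add_mul (c := 0) (a := 1 - x i) (b := -u i) (sub_nonneg.2 (hx.1 i).2)
        fun h => sub_pos.2 (hu i (neg_ne_zero.1 h)).2).mono fun s hs => by linarith
  have hodd : ∀ V : Finset ι, Odd #V →
      ∀ᶠ s in 𝓝 (0 : ℝ), 1 ≤ oddSetSlack x V + s * ∑ i, oddSetSign V i * u i := fun V hV =>
    eventually_le_add_mul (hx.2 V hV) fun h =>
      (hx.2 V hV).lt_of_ne fun e => h (htight V hV e.symm)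
  filter_upwards [eventually_all.2 hbox,
    eventually_all.2 fun V => eventually_imp_distrib_left.2 (hodd V)] with s hs hs'
  refine mem_oddSetPolytope_iff.2 ⟨fun i => by simpa using hs i, fun V hV => ?_⟩
  rw [oddSetSlack_add_smul]
  exact hs' V hV

theorem eq_zero_of_mem_extremePoints_oddSetPolytope {x u : ι → ℝ}
    (hx : x ∈ (oddSetPolytope ι).extremePoints ℝ) (hu : ∀ i, u i ≠ 0 → x i ∈ Set.Ioo 0 1)
    (htight : ∀ V : Finset ι, Odd #V → oddSetSlack x V = 1 → ∑ i, oddSetSign V i * u i = 0) :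
    u = 0 := by
  have h := eventually_add_smul_mem_oddSetPolytope hx.1 hu htight
  obtain ⟨s, ⟨hs_pos, hs_neg⟩, hs0⟩ : ∃ s : ℝ, (x + s • u ∈ oddSetPolytope ι ∧
      x + (-s) • u ∈ oddSetPolytope ι) ∧ s ≠ 0 :=
    (((h.and ((continuous_neg.tendsto' (0 : ℝ) 0 neg_zero).eventually h)).filter_mono
      nhdsWithin_le_nhds).and (eventually_mem_nhdsWithin (s := {0}ᶜ))).exists
  have hseg : x ∈ openSegment ℝ (x + s • u) (x + (-s) • u) :=
    ⟨1 / 2, 1 / 2, by norm_num, by norm_num, by norm_num, by ext; simp; ring⟩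
  simpa [hs0] using hx.2 hs_pos hs_neg hseg

theorem notMem_Ioo_of_mem_extremePoints_oddSetPolytope {x : ι → ℝ}
    (hx : x ∈ (oddSetPolytope ι).extremePoints ℝ) (j : ι) : x j ∉ Set.Ioo 0 1 := by
  intro hj
  have hbox := (mem_oddSetPolytope_iff.1 hx.1).1
  by_cases htight : ∃ V₀ : Finset ι, Odd #V₀ ∧ oddSetSlack x V₀ = 1
  · obtain ⟨V₀, hV₀, e₀⟩ := htight
    obtain ⟨k, hkj, hk⟩ := exists_ne_mem_Ioo_of_oddSetSlack_eq_one hbox e₀ hj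
    -- keeps `V₀` tight, and every other tight set differs from `V₀` at both `j` and `k`
    set u : ι → ℝ := Pi.single j (oddSetSign V₀ k) - Pi.single k (oddSetSign V₀ j)
    have hu : ∀ i, u i ≠ 0 → x i ∈ Set.Ioo 0 1 := by
      intro i hi
      by_cases hij : i = j
      · exact hij ▸ hj
      by_cases hik : i = k
      · exact hik ▸ hk
      simp [u, hij, hik] at hi
    have htight : ∀ V : Finset ι, Odd #V → oddSetSlack x V = 1 →
        ∑ i, oddSetSign V i * u i = 0 := by
      intro V hV e
      have hsign : oddSetSign V j * oddSetSign V₀ k = oddSetSign V k * oddSetSign V₀ j := by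
        rcases eq_or_ne V V₀ with rfl | hne
        · ring
        have hmem := fun {i} => mem_symmDiff_of_oddSetSlack_eq_one (i := i) hbox hV hV₀ hne e e₀
        rw [oddSetSign_of_mem_symmDiff (hmem hj), oddSetSign_of_mem_symmDiff (hmem hk)]
        ring
      simp [u, mul_sub, sum_sub_distrib, Pi.single_apply, hsign]
    have hu0 := congrFun (eq_zero_of_mem_extremePoints_oddSetPolytope hx hu htight) j
    simp only [u, Pi.sub_apply, Pi.single_eq_same, Pi.single_eq_of_ne hkj.symm, sub_zero,
      Pi.zero_apply, oddSetSign] at hu0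
    split_ifs at hu0 <;> norm_num at hu0
  · push Not at htight
    have hu0 := eq_zero_of_mem_extremePoints_oddSetPolytope hx (u := Pi.single j 1)
      (fun i hi => (by simpa [Pi.single_apply] using hi : i = j) ▸ hj)
      (fun V hV e => absurd e (htight V hV))
    simpa using congrFun hu0 j

theorem extremePoints_oddSetPolytope_subset_evenVertices :
    (oddSetPolytope ι).extremePoints ℝ ⊆ evenVertices ι := by
  intro x hx
  have hQ := mem_oddSetPolytope_iff.1 hx.1
  set S := univ.filter (x · = 1)
  have hxS : x = fun i => if i ∈ S then 1 else 0 := by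
    ext i
    have hfrac := notMem_Ioo_of_mem_extremePoints_oddSetPolytope hx i
    have hbox := hQ.1 i
    simp only [S, mem_filter, mem_univ, true_and, Set.mem_Ioo, not_and_or, not_lt] at hfrac ⊢
    split_ifs <;> grind
  refine ⟨S, Nat.not_odd_iff_even.1 fun hS => ?_, fun i => congrFun hxS i⟩
  have := hQ.2 S hS
  rw [hxS, oddSetSlack_indicator, symmDiff_self] at this
  norm_num at this

variable (ι) in
theorem convexHull_evenVertices : convexHull ℝ (evenVertices ι) = oddSetPolytope ι := by
  refine (convexHull_min evenVertices_subset_oddSetPolytope convex_oddSetPolytope).antisymm ?_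
  calc oddSetPolytope ι = closure (convexHull ℝ ((oddSetPolytope ι).extremePoints ℝ)) :=
        (closure_convexHull_extremePoints isCompact_oddSetPolytope convex_oddSetPolytope).symm
    _ ⊆ closure (convexHull ℝ (evenVertices ι)) :=
        closure_mono (convexHull_mono extremePoints_oddSetPolytope_subset_evenVertices)
    _ = convexHull ℝ (evenVertices ι) :=
        (finite_evenVertices.isCompact_convexHull ℝ).isClosed.closure_eq

end ParityPolytope

theorem even_parity_polytope_description_general (d : ℕ) :
    PEven d = {x : Fin d → ℝ | (∀ i, 0 ≤ x i ∧ x i ≤ 1) ∧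
      ∀ V : Finset (Fin d), Odd V.card →
        ∑ i ∈ V, x i - ∑ i ∈ Vᶜ, x i ≤ (V.card : ℝ) - 1} :=
  convexHull_evenVertices (Fin d)

theorem even_parity_polytope_description (d : ℕ) (hd : 1 ≤ d) :
    PEven d = {x : Fin d → ℝ | (∀ i, 0 ≤ x i ∧ x i ≤ 1) ∧
      ∀ V : Finset (Fin d), Odd V.card →
        ∑ i ∈ V, x i - ∑ i ∈ Vᶜ, x i ≤ (V.card : ℝ) - 1} :=
  even_parity_polytope_description_general d
end

section
/- Let d ≥ 2, V ⊆ {1,…,d}, and let θ ∈ {±1}^d be defined by θⱼ = 1 iff j ∈ V. Let x ∈ ℝ^d, v = x - ((θᵀx - (|V|-1))/d)·θ the projection of x onto the hyperplane θᵀw = |V|-1, and z = Π_F(x) the projection onto the face F = {w ∈ [0,1]^d : θᵀw = |V|-1}, assumed nonempty. If vᵢ > 1 and θᵢ = 1 for some index i, then zᵢ = 1. -/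
open Finset

theorem fix_component_to_one (d : ℕ) (hd : 2 ≤ d) (V : Finset (Fin d))
    (θ : Fin d → ℝ) (hθ : ∀ j, θ j = if j ∈ V then 1 else -1)
    (x v : Fin d → ℝ)
    (hv : v = fun j => x j - ((∑ k, θ k * x k - ((V.card : ℝ) - 1)) / (d : ℝ)) * θ j)
    (F : Set (Fin d → ℝ))
    (hF : F = {w | (∀ j, 0 ≤ w j ∧ w j ≤ 1) ∧ ∑ k, θ k * w k = (V.card : ℝ) - 1})
    (hFne : F.Nonempty)
    (z : Fin d → ℝ) (hz : IsProj F x z)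
    (i : Fin d) (hvi : 1 < v i) (hθi : θ i = 1) : z i = 1 := by
  obtain ⟨hzF, hzmin⟩ := hz
  rw [hF] at hzF hzmin
  obtain ⟨hzbox, hzsum⟩ := hzF
  have hdpos : (0:ℝ) < (d:ℝ) := by
    have : 0 < d := lt_of_lt_of_le (by norm_num) hd
    exact_mod_cast this
  have hθsq : ∀ j, θ j * θ j = 1 := by
    intro j; rw [hθ]; split <;> norm_num
  have hθθ : ∑ k, θ k * θ k = (d : ℝ) := by
    rw [Finset.sum_congr rfl (fun k _ => hθsq k)]
    simp
  set b : ℝ := (V.card : ℝ) - 1 with hbdef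
  set lam : ℝ := (∑ k, θ k * x k - b) / d with hlamdef
  have hx : ∀ k, x k = v k + lam * θ k := by
    intro k; rw [hv]; simp
  have hvsum : ∑ k, θ k * v k = b := by
    have h1 : ∑ k, θ k * x k = ∑ k, (θ k * v k + lam * (θ k * θ k)) :=
      Finset.sum_congr rfl (fun k _ => by rw [hx k]; ring)
    rw [Finset.sum_add_distrib, ← Finset.mul_sum, hθθ] at h1
    have h2 : lam * (d : ℝ) = ∑ k, θ k * x k - b := by
      rw [hlamdef]; field_simp
    linarith
  by_contra hne
  have hzi1 : z i ≤ 1 := (hzbox i).2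
  have hzilt : z i < 1 := lt_of_le_of_ne hzi1 hne
  have hiV : i ∈ V := by
    by_contra h
    have := hθ i
    rw [if_neg h, hθi] at this
    norm_num at this
  -- deficiency sum equals 1
  have hf0 : ∀ k, 0 ≤ (if k ∈ V then 1 - z k else z k) := by
    intro k; split
    · linarith [(hzbox k).2]
    · exact (hzbox k).1
  have hfsum : ∑ k, (if k ∈ V then 1 - z k else z k) = 1 := by
    have h1 : ∀ k, (if k ∈ V then 1 - z k else z k)
        = (if k ∈ V then (1:ℝ) else 0) - θ k * z k := by
      intro k; rw [hθ]; split <;> ring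
    rw [Finset.sum_congr rfl (fun k _ => h1 k), Finset.sum_sub_distrib, hzsum]
    simp only [Finset.sum_ite_mem, Finset.univ_inter, Finset.sum_const, nsmul_eq_mul,
      mul_one, hbdef]
    ring
  -- key variational inequality
  have hkey : ∀ j, j ≠ i → v i - z i ≤ θ j * (v j - z j) := by
    intro j hj
    have hji : ¬ (i = j) := fun h => hj h.symm
    -- slack at j
    have hfle : (if j ∈ V then 1 - z j else z j) ≤ z i := by
      have e1 : ∑ k, (if k ∈ V then 1 - z k else z k)
          = (if i ∈ V then 1 - z i else z i)
            + ∑ k ∈ Finset.univ.erase i, (if k ∈ V then 1 - z k else z k) :=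
        (Finset.add_sum_erase _ _ (Finset.mem_univ i)).symm
      have e2 : (if j ∈ V then 1 - z j else z j)
          ≤ ∑ k ∈ Finset.univ.erase i, (if k ∈ V then 1 - z k else z k) :=
        Finset.single_le_sum (fun k _ => hf0 k)
          (Finset.mem_erase.mpr ⟨hj, Finset.mem_univ j⟩)
      rw [if_pos hiV] at e1
      rw [hfsum] at e1
      linarith
    set s : ℝ := if j ∈ V then z j else 1 - z j with hsdef
    have hs : 0 < s := by
      rw [hsdef]
      by_cases hjV : j ∈ V
      · rw [if_pos hjV]; rw [if_pos hjV] at hfle; linarith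
      · rw [if_neg hjV]; rw [if_neg hjV] at hfle; linarith
    set c : ℝ := (v i - z i) - θ j * (v j - z j) with hcdef
    by_contra hcon
    have hc : 0 < c := by rw [hcdef]; linarith [not_le.mp hcon]
    set ε : ℝ := min (min (1 - z i) s) (c / 2) with hεdef
    have hε : 0 < ε := by
      apply lt_min (lt_min (by linarith) hs) (by linarith)
    have hε1 : ε ≤ 1 - z i := le_trans (min_le_left _ _) (min_le_left _ _)
    have hεs : ε ≤ s := le_trans (min_le_left _ _) (min_le_right _ _)
    have hεc : ε ≤ c / 2 := min_le_right _ _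
    set y : Fin d → ℝ := fun k =>
      z k + (if k = i then ε else 0) - (if k = j then θ j * ε else 0) with hydef
    have hyk : ∀ k, y k
        = z k + (if k = i then ε else 0) - (if k = j then θ j * ε else 0) :=
      fun k => rfl
    have hybox : ∀ k, 0 ≤ y k ∧ y k ≤ 1 := by
      intro k
      by_cases h1 : k = i
      · have h2 : ¬ (k = j) := by rw [h1]; exact hji
        rw [hyk k, if_pos h1, if_neg h2, h1]
        constructor
        · linarith [(hzbox i).1]
        · linarith
      · by_cases h2 : k = j
        · rw [hyk k, if_neg h1, if_pos h2, h2]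
          by_cases hjV : j ∈ V
          · have hθj : θ j = 1 := by rw [hθ, if_pos hjV]
            rw [hθj]
            rw [hsdef, if_pos hjV] at hεs
            constructor
            · linarith
            · linarith [(hzbox j).2]
          · have hθj : θ j = -1 := by rw [hθ, if_neg hjV]
            rw [hθj]
            rw [hsdef, if_neg hjV] at hεs
            constructor
            · linarith [(hzbox j).1]
            · linarith
        · rw [hyk k, if_neg h1, if_neg h2]
          have := hzbox k
          constructor <;> linarith [this.1, this.2]
    have hysum : ∑ k, θ k * y k = b := by
      have h1 : ∀ k, θ k * y k
          = θ k * z k + (if k = i then θ k * ε else 0)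
            - (if k = j then θ k * (θ j * ε) else 0) := by
        intro k
        rw [hyk k]
        by_cases h1 : k = i <;> by_cases h2 : k = j
        · exact absurd (h1.symm.trans h2) hji
        · rw [if_pos h1, if_neg h2, if_pos h1, if_neg h2]; ring
        · rw [if_neg h1, if_pos h2, if_neg h1, if_pos h2]; ring
        · rw [if_neg h1, if_neg h2, if_neg h1, if_neg h2]; ring
      rw [Finset.sum_congr rfl (fun k _ => h1 k), Finset.sum_sub_distrib,
        Finset.sum_add_distrib, hzsum, Finset.sum_ite_eq', Finset.sum_ite_eq']
      simp only [Finset.mem_univ, if_pos, hθi]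
      have := hθsq j
      nlinarith [hθsq j]
    have hyF : y ∈ {w : Fin d → ℝ | (∀ j, 0 ≤ w j ∧ w j ≤ 1) ∧ ∑ k, θ k * w k = b} :=
      ⟨hybox, hysum⟩
    have hle := hzmin y hyF
    -- expand the squared distance difference
    have hdiff : sqdist x y - sqdist x z
        = (-2*ε*(x i - z i) + ε^2) + (2*(θ j)*ε*(x j - z j) + (θ j * ε)^2) := by
      unfold sqdist
      rw [← Finset.sum_sub_distrib]
      have h2 : ∀ k, (x k - y k)^2 - (x k - z k)^2
          = (if k = i then -2*ε*(x i - z i) + ε^2 else 0)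
            + (if k = j then 2*(θ j)*ε*(x j - z j) + (θ j * ε)^2 else 0) := by
        intro k
        rw [hyk k]
        by_cases h1 : k = i
        · have h2 : ¬ (k = j) := by rw [h1]; exact hji
          rw [if_pos h1, if_neg h2, if_pos h1, if_neg h2, h1]
          ring
        · by_cases h2 : k = j
          · rw [if_neg h1, if_pos h2, if_neg h1, if_pos h2, h2]
            ring
          · rw [if_neg h1, if_neg h2, if_neg h1, if_neg h2]
            ring
      rw [Finset.sum_congr rfl (fun k _ => h2 k), Finset.sum_add_distrib,
        Finset.sum_ite_eq', Finset.sum_ite_eq']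
      simp
    have hsq2 : (θ j * ε)^2 = ε^2 := by
      linear_combination ε^2 * hθsq j
    -- the VI in terms of x
    have hvi2 : (x i - z i) - θ j * (x j - z j) ≤ ε := by
      have h0 : 2*ε*((x i - z i) - θ j * (x j - z j)) ≤ 2*ε*ε := by
        rw [hsq2] at hdiff
        linarith [hle, hdiff]
      exact le_of_mul_le_mul_left h0 (by linarith)
    -- convert to v
    have hxy : (x i - z i) - θ j * (x j - z j)
        = (v i - z i) - θ j * (v j - z j) := by
      rw [hx i, hx j, hθi]
      linear_combination (-lam) * hθsq j
    rw [hxy] at hvi2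
    rw [hcdef] at hεc hc
    linarith
  -- sum of θ k * (v k - z k) is 0
  have hsum0 : ∑ k, θ k * (v k - z k) = 0 := by
    have h1 : ∀ k, θ k * (v k - z k) = θ k * v k - θ k * z k := fun k => by ring
    rw [Finset.sum_congr rfl (fun k _ => h1 k), Finset.sum_sub_distrib, hvsum, hzsum]
    ring
  have hlow : ∀ k ∈ Finset.univ, v i - z i ≤ θ k * (v k - z k) := by
    intro k _
    by_cases hk : k = i
    · subst hk; rw [hθi]; linarith
    · exact hkey k hk
  have hcard := Finset.card_nsmul_le_sum Finset.univ (fun k => θ k * (v k - z k))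
    (v i - z i) hlow
  rw [hsum0] at hcard
  have hcard2 : (d : ℝ) * (v i - z i) ≤ 0 := by
    have hcu : (Finset.univ : Finset (Fin d)).card = d := by simp
    rw [hcu] at hcard
    simpa [nsmul_eq_mul] using hcard
  have hd2 : (2:ℝ) ≤ (d:ℝ) := by exact_mod_cast hd
  nlinarith
end

section
/- Let d ≥ 2, V ⊆ {1,…,d}, θ ∈ {±1}^d with θⱼ = 1 iff j ∈ V, x ∈ ℝ^d, v = x - ((θᵀx - (|V|-1))/d)·θ, and z = Π_F(x) where F = {w ∈ [0,1]^d : θᵀw = |V|-1} is nonempty. If vᵢ < 0 and θᵢ = -1 for some index i, then zᵢ = 0. -/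
open Finset

/-! The reflection `w p ↦ 1 - w p` for `p ∈ V` is an isometry of the cube carrying the face `F`
onto the standard simplex, `x` to a point `y`, and `v` to `y + t • 1` with coordinate sum `1`.
On the simplex, optimality of the projection `ζ` against moving mass from a coordinate `i`
with `ζ i > 0` to any other coordinate forces `y j - ζ j ≤ y i - ζ i` for all `j`. If moreover
`y i + t < 0`, then every `y j + t - ζ j` is negative, contradicting `∑ (y j + t - ζ j) = 1 - 1`. -/

variable {d : ℕ}

lemma sqdist_add_smul (x z u : Fin d → ℝ) (ε : ℝ) :
    sqdist x (z + ε • u) = sqdist x z - 2 * ε * ∑ k, u k * (x k - z k) + ε ^ 2 * ∑ k, u k ^ 2 := by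
  simp only [sqdist, Pi.add_apply, Pi.smul_apply, smul_eq_mul, mul_sum, ← sum_sub_distrib,
    ← sum_add_distrib]
  exact sum_congr rfl fun k _ => by ring

lemma IsProj.sum_mul_sub_nonpos {S : Set (Fin d → ℝ)} {x z : Fin d → ℝ} (hz : IsProj S x z)
    (u : Fin d → ℝ) {ε₀ : ℝ} (hε₀ : 0 < ε₀) (hu : ∀ ε ∈ Set.Ioc 0 ε₀, z + ε • u ∈ S) :
    ∑ k, u k * (x k - z k) ≤ 0 := by
  by_contra! hc
  set c := ∑ k, u k * (x k - z k)
  set N := ∑ k, u k ^ 2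
  have hN : 0 ≤ N := sum_nonneg fun k _ => sq_nonneg (u k)
  set ε := min ε₀ (c / (N + 1))
  have hε : 0 < ε := lt_min hε₀ (by positivity)
  have hεc : ε * (N + 1) ≤ c := (le_div_iff₀ (by positivity)).1 (min_le_right _ _)
  have hopt := hz.2 _ (hu ε ⟨hε, min_le_left _ _⟩)
  rw [sqdist_add_smul] at hopt
  nlinarith [mul_pos hε hc]

lemma IsProj.preimage_of_involutive {S : Set (Fin d → ℝ)} {x z : Fin d → ℝ}
    {f : (Fin d → ℝ) → Fin d → ℝ} (hf : Function.Involutive f)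
    (hiso : ∀ a b, sqdist (f a) (f b) = sqdist a b) (hz : IsProj S x z) :
    IsProj (f ⁻¹' S) (f x) (f z) := by
  refine ⟨by simpa [Set.mem_preimage, hf z] using hz.1, fun y hy => ?_⟩
  rw [hiso, ← hf y, hiso]
  exact hz.2 _ hy

lemma IsProj.sub_le_sub_of_pos {y ζ : Fin d → ℝ} (hζ : IsProj (stdSimplex ℝ (Fin d)) y ζ)
    {i : Fin d} (hi : 0 < ζ i) (j : Fin d) : y j - ζ j ≤ y i - ζ i := by
  have hmove : ∀ ε ∈ Set.Ioc 0 (ζ i),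
      ζ + ε • (Pi.single j 1 - Pi.single i 1) ∈ stdSimplex ℝ (Fin d) := by
    rintro ε ⟨hε, hεi⟩
    refine ⟨fun k => ?_, ?_⟩
    · have := hζ.1.1 k
      simp only [Pi.add_apply, Pi.smul_apply, Pi.sub_apply, smul_eq_mul, Pi.single_apply]
      split_ifs with hj hi' <;> subst_vars <;> linarith
    · simp [sum_add_distrib, ← mul_sum, sum_sub_distrib, hζ.1.2]
  have := hζ.sum_mul_sub_nonpos _ hi hmove
  simp only [Pi.sub_apply, sub_mul, sum_sub_distrib, Pi.single_apply, ite_mul, one_mul, zero_mul,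
    sum_ite_eq', mem_univ, if_true] at this
  linarith

lemma IsProj.eq_zero_of_add_const_neg {y ζ : Fin d → ℝ}
    (hζ : IsProj (stdSimplex ℝ (Fin d)) y ζ) (c : ℝ) (hsum : ∑ p, (y p + c) = 1) {i : Fin d}
    (hi : y i + c < 0) : ζ i = 0 := by
  by_contra hne
  have hpos : 0 < ζ i := lt_of_le_of_ne (hζ.1.1 i) (Ne.symm hne)
  have hlt : ∑ p, (y p + c - ζ p) < ∑ _p : Fin d, (0 : ℝ) :=
    sum_lt_sum_of_nonempty ⟨i, mem_univ i⟩ fun p _ => by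
      linarith [hζ.sub_le_sub_of_pos hpos p]
  rw [sum_sub_distrib, hsum, hζ.1.2] at hlt
  simp at hlt

def cubeFlip (V : Finset (Fin d)) (w : Fin d → ℝ) : Fin d → ℝ :=
  fun p => if p ∈ V then 1 - w p else w p

lemma cubeFlip_involutive (V : Finset (Fin d)) : Function.Involutive (cubeFlip V) := by
  intro w; ext p; by_cases hp : p ∈ V <;> simp [cubeFlip, hp]

lemma sqdist_cubeFlip (V : Finset (Fin d)) (a b : Fin d → ℝ) :
    sqdist (cubeFlip V a) (cubeFlip V b) = sqdist a b :=
  sum_congr rfl fun p _ => by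
    by_cases hp : p ∈ V <;> simp [cubeFlip, hp]
    ring

lemma sum_mul_cubeFlip {V : Finset (Fin d)} {θ : Fin d → ℝ}
    (hθ : ∀ j, θ j = if j ∈ V then 1 else -1) (w : Fin d → ℝ) :
    ∑ p, θ p * cubeFlip V w p = V.card - ∑ p, w p := by
  have hterm : ∀ p, θ p * cubeFlip V w p = (if p ∈ V then 1 else 0) - w p := fun p => by
    by_cases hp : p ∈ V <;> simp [cubeFlip, hθ p, hp]
  simp [hterm, sum_sub_distrib, sum_ite_mem]

lemma cubeFlip_sub_smul {V : Finset (Fin d)} {θ : Fin d → ℝ}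
    (hθ : ∀ j, θ j = if j ∈ V then 1 else -1) (x : Fin d → ℝ) (t : ℝ) (p : Fin d) :
    cubeFlip V (fun j => x j - t * θ j) p = cubeFlip V x p + t := by
  by_cases hp : p ∈ V <;> simp [cubeFlip, hθ p, hp]
  ring

lemma cubeFlip_preimage_face {V : Finset (Fin d)} {θ : Fin d → ℝ}
    (hθ : ∀ j, θ j = if j ∈ V then 1 else -1) :
    cubeFlip V ⁻¹' {w | (∀ j, 0 ≤ w j ∧ w j ≤ 1) ∧ ∑ k, θ k * w k = (V.card : ℝ) - 1} =
      stdSimplex ℝ (Fin d) := by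
  ext ζ
  have hbox : ∀ j, (0 ≤ cubeFlip V ζ j ∧ cubeFlip V ζ j ≤ 1) ↔ (0 ≤ ζ j ∧ ζ j ≤ 1) := fun j => by
    by_cases hj : j ∈ V <;> simp [cubeFlip, hj]
    constructor <;> rintro ⟨h0, h1⟩ <;> constructor <;> linarith
  simp only [Set.mem_preimage, Set.mem_ofPred_eq, hbox, sum_mul_cubeFlip hθ, stdSimplex,
    sub_right_inj]
  refine ⟨fun h => ⟨fun j => (h.1 j).1, h.2⟩, fun h => ⟨fun j => ⟨h.1 j, ?_⟩, h.2⟩⟩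
  exact h.2 ▸ single_le_sum (fun k _ => h.1 k) (mem_univ j)

lemma sum_mul_self_eq_card {V : Finset (Fin d)} {θ : Fin d → ℝ}
    (hθ : ∀ j, θ j = if j ∈ V then 1 else -1) : ∑ k, θ k * θ k = d := by
  simp [fun k => show θ k * θ k = 1 by by_cases hk : k ∈ V <;> simp [hθ k, hk]]

theorem fix_component_to_zero_general (d : ℕ) (V : Finset (Fin d))
    (θ : Fin d → ℝ) (hθ : ∀ j, θ j = if j ∈ V then 1 else -1)
    (x v : Fin d → ℝ)
    (hv : v = fun j => x j - ((∑ k, θ k * x k - ((V.card : ℝ) - 1)) / (d : ℝ)) * θ j)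
    (F : Set (Fin d → ℝ))
    (hF : F = {w | (∀ j, 0 ≤ w j ∧ w j ≤ 1) ∧ ∑ k, θ k * w k = (V.card : ℝ) - 1})
    (z : Fin d → ℝ) (hz : IsProj F x z)
    (i : Fin d) (hvi : v i < 0) (hθi : θ i = -1) : z i = 0 := by
  set t := (∑ k, θ k * x k - ((V.card : ℝ) - 1)) / d
  have hiV : i ∉ V := fun h => by norm_num [hθ i, h] at hθi
  have hproj : IsProj (stdSimplex ℝ (Fin d)) (cubeFlip V x) (cubeFlip V z) := by
    rw [← cubeFlip_preimage_face hθ, ← hF]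
    exact hz.preimage_of_involutive (cubeFlip_involutive V) (sqdist_cubeFlip V)
  have hshift : ∀ p, cubeFlip V v p = cubeFlip V x p + t := hv ▸ cubeFlip_sub_smul hθ x t
  have hd : (d : ℝ) ≠ 0 := Nat.cast_ne_zero.2 i.pos.ne'
  have hvθ : ∑ k, θ k * v k = V.card - 1 := by
    simp only [hv, mul_sub, sum_sub_distrib]
    simp only [fun k => show θ k * (t * θ k) = t * (θ k * θ k) by ring, ← mul_sum,
      sum_mul_self_eq_card hθ, t]
    field_simp
    ring
  have hsum : ∑ p, (cubeFlip V x p + t) = 1 := by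
    have := sum_mul_cubeFlip hθ (cubeFlip V v)
    rw [cubeFlip_involutive V v, hvθ] at this
    simp only [← hshift]
    linarith
  have := hproj.eq_zero_of_add_const_neg t hsum (i := i)
    (by rw [← hshift i]; simpa [cubeFlip, hiV] using hvi)
  simpa [cubeFlip, hiV] using this

theorem fix_component_to_zero (d : ℕ) (hd : 2 ≤ d) (V : Finset (Fin d))
    (θ : Fin d → ℝ) (hθ : ∀ j, θ j = if j ∈ V then 1 else -1)
    (x v : Fin d → ℝ)
    (hv : v = fun j => x j - ((∑ k, θ k * x k - ((V.card : ℝ) - 1)) / (d : ℝ)) * θ j)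
    (F : Set (Fin d → ℝ))
    (hF : F = {w | (∀ j, 0 ≤ w j ∧ w j ≤ 1) ∧ ∑ k, θ k * w k = (V.card : ℝ) - 1})
    (hFne : F.Nonempty)
    (z : Fin d → ℝ) (hz : IsProj F x z)
    (i : Fin d) (hvi : v i < 0) (hθi : θ i = -1) : z i = 0 :=
  fix_component_to_zero_general d V θ hθ x v hv F hF z hz i hvi hθi
end

section
/- For d ≥ 2 and any index i ∈ {1,…,d}, the set {x ∈ P_{d,even} : xᵢ = 1} equals the set of vectors obtained by inserting the value 1 at position i into a vector of P_{d-1,odd}; i.e., {x ∈ P_{d,even} : xᵢ = 1} = {(x̃₁,…,x̃_{i-1}, 1, x̃ᵢ,…,x̃_{d-1}) : x̃ ∈ P_{d-1,odd}}. -/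
open Finset

/-- Insertion as an affine map. -/
noncomputable def insAff (n : ℕ) (i : Fin (n + 1)) :
    (Fin n → ℝ) →ᵃ[ℝ] (Fin (n + 1) → ℝ) where
  toFun := fun xt => i.insertNth (1 : ℝ) xt
  linear :=
    { toFun := fun xt => i.insertNth (0 : ℝ) xt
      map_add' := by
        intro x y
        funext j
        induction j using Fin.succAboveCases (i := i) with
        | x => simp
        | p k => simp
      map_smul' := by
        intro c x
        funext j
        induction j using Fin.succAboveCases (i := i) with
        | x => simp
        | p k => simp }
  map_vadd' := by
    intro p v
    funext j
    induction j using Fin.succAboveCases (i := i) with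
    | x => simp
    | p k => simp

/-- Face extraction: a point of a convex hull where coordinate `i` attains the upper
bound `1` lies in the convex hull of the vertices with coordinate `i` equal to `1`. -/
theorem mem_convexHull_face {d : ℕ} (V : Set (Fin d → ℝ)) (i : Fin d)
    (hV : ∀ v ∈ V, v i ≤ 1) {x : Fin d → ℝ}
    (hx : x ∈ convexHull ℝ V) (hxi : x i = 1) :
    x ∈ convexHull ℝ {v ∈ V | v i = 1} := by
  rw [_root_.convexHull_eq] at hx
  obtain ⟨ι, t, w, z, hw₀, hw₁, hz, hcm⟩ := hx
  have hsum : ∑ j ∈ t, w j * z j i = 1 := by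
    have : x = ∑ j ∈ t, w j • z j := by
      rw [← hcm, Finset.centerMass_eq_of_sum_1 _ _ hw₁]
    rw [this] at hxi
    simpa using hxi
  have hzero : ∀ j ∈ t, w j * (1 - z j i) = 0 := by
    have hsum0 : ∑ j ∈ t, w j * (1 - z j i) = 0 := by
      have : ∑ j ∈ t, w j * (1 - z j i) = (∑ j ∈ t, w j) - ∑ j ∈ t, w j * z j i := by
        rw [← Finset.sum_sub_distrib]; congr 1; ext j; ring
      rw [this, hw₁, hsum, sub_self]
    exact fun j hj => (Finset.sum_eq_zero_iff_of_nonneg fun j hj =>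
      mul_nonneg (hw₀ j hj) (sub_nonneg.2 (hV _ (hz j hj)))).1 hsum0 j hj
  rw [← hcm, ← Finset.centerMass_filter_ne_zero]
  apply Finset.centerMass_mem_convexHull
  · exact fun j hj => hw₀ j (Finset.mem_filter.1 hj).1
  · rw [Finset.sum_filter_ne_zero, hw₁]; exact one_pos
  · intro j hj
    rw [Finset.mem_filter] at hj
    refine ⟨hz j hj.1, ?_⟩
    have := hzero j hj.1
    rcases mul_eq_zero.1 this with h | h
    · exact absurd h hj.2
    · linarith [sub_eq_zero.1 h]

theorem vertex_image (n : ℕ) (i : Fin (n + 1)) :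
    (fun xt : Fin n → ℝ => i.insertNth (1 : ℝ) xt) ''
        {x | ∃ S : Finset (Fin n), Odd S.card ∧ ∀ j, x j = if j ∈ S then 1 else 0} =
      {v ∈ {x : Fin (n + 1) → ℝ | ∃ S : Finset (Fin (n + 1)), Even S.card ∧ ∀ j, x j = if j ∈ S then 1 else 0} |
        v i = 1} := by
  ext v
  constructor
  · rintro ⟨xt, ⟨S, hS, hxt⟩, rfl⟩
    refine ⟨⟨insert i (S.map i.succAboveEmb), ?_, ?_⟩, ?_⟩
    case refine_3 =>
      beta_reduce
      exact Fin.insertNth_apply_same (α := fun _ => ℝ) i 1 xt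
    · rw [Finset.card_insert_of_notMem, Finset.card_map]
      · exact Odd.add_one hS
      · simp only [Finset.mem_map]
        rintro ⟨k, -, hk⟩
        exact Fin.succAbove_ne i k hk
    · intro j
      beta_reduce
      induction j using Fin.succAboveCases (i := i) with
      | x => simp [Fin.insertNth_apply_same]
      | p k =>
        rw [Fin.insertNth_apply_succAbove, hxt k]
        have : i.succAbove k ∈ insert i (S.map i.succAboveEmb) ↔ k ∈ S := by
          simp only [Finset.mem_insert, Finset.mem_map]
          constructor
          · rintro (h | ⟨m, hm, hmk⟩)
            · exact absurd h (Fin.succAbove_ne i k)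
            · rwa [← Fin.succAbove_right_injective (p := i) hmk]
          · intro h; exact Or.inr ⟨k, h, rfl⟩
        simp only [this]
  · rintro ⟨⟨T, hT, hv⟩, hvi⟩
    have hiT : i ∈ T := by
      by_contra h
      rw [hv i, if_neg h] at hvi
      norm_num at hvi
    set S : Finset (Fin n) := Finset.univ.filter (fun k => i.succAbove k ∈ T) with hSdef
    have hcard : S.card = (T.erase i).card := by
      apply Finset.card_bij (fun k _ => i.succAbove k)
      · intro k hk
        rw [Finset.mem_erase]
        exact ⟨Fin.succAbove_ne i k, (Finset.mem_filter.1 hk).2⟩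
      · intro a ha b hb hab
        exact Fin.succAbove_right_injective (p := i) hab
      · intro j hj
        rw [Finset.mem_erase] at hj
        obtain ⟨k, hk⟩ := Fin.exists_succAbove_eq hj.1
        exact ⟨k, Finset.mem_filter.2 ⟨Finset.mem_univ _, hk ▸ hj.2⟩, hk⟩
    refine ⟨fun k => if k ∈ S then 1 else 0, ⟨S, ?_, fun _ => rfl⟩, ?_⟩
    · rw [hcard, Finset.card_erase_of_mem hiT]
      exact Nat.Even.sub_odd (Nat.one_le_iff_ne_zero.2 (Finset.card_ne_zero_of_mem hiT)) hT
        odd_one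
    · funext j
      beta_reduce
      induction j using Fin.succAboveCases (i := i) with
      | x => rw [Fin.insertNth_apply_same, hvi]
      | p k =>
        rw [Fin.insertNth_apply_succAbove, hv (i.succAbove k)]
        have : k ∈ S ↔ i.succAbove k ∈ T := by
          simp [hSdef]
        simp only [this]

theorem even_polytope_slice_one (n : ℕ) (hn : 1 ≤ n) (i : Fin (n + 1)) :
    {x ∈ PEven (n + 1) | x i = 1} =
      (fun xt : Fin n → ℝ => i.insertNth (1 : ℝ) xt) '' POdd n := by
  have himg : (fun xt : Fin n → ℝ => i.insertNth (1 : ℝ) xt) '' POdd n =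
      convexHull ℝ
        {v ∈ {x : Fin (n + 1) → ℝ | ∃ S : Finset (Fin (n + 1)), Even S.card ∧ ∀ j, x j = if j ∈ S then 1 else 0} |
          v i = 1} := by
    rw [← vertex_image n i, POdd]
    exact (insAff n i).image_convexHull
      {x | ∃ S : Finset (Fin n), Odd S.card ∧ ∀ j, x j = if j ∈ S then 1 else 0}
  rw [himg]
  ext x
  constructor
  · rintro ⟨hx, hxi⟩
    exact mem_convexHull_face _ i (by rintro v ⟨S, -, hv⟩; rw [hv i]; split <;> norm_num)
      hx hxi
  · intro hx
    constructor
    · exact convexHull_mono (fun v hv => hv.1) hx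
    · have hsub : {v ∈ {x : Fin (n+1) → ℝ |
          ∃ S : Finset (Fin (n + 1)), Even S.card ∧ ∀ j, x j = if j ∈ S then 1 else 0} |
          v i = 1} ⊆ {v : Fin (n+1) → ℝ | v i = 1} := fun v hv => hv.2
      have hconv : Convex ℝ {v : Fin (n+1) → ℝ | v i = 1} := by
        have : {v : Fin (n+1) → ℝ | v i = 1} =
            (LinearMap.proj (R := ℝ) (φ := fun _ : Fin (n+1) => ℝ) i) ⁻¹' {1} := rfl
        rw [this]
        exact (convex_singleton 1).linear_preimage _
      exact convexHull_min hsub hconv hx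
end

section
/- For d ≥ 2 and any index i ∈ {1,…,d}, {x ∈ P_{d,even} : xᵢ = 0} = {(x̃₁,…,x̃_{i-1}, 0, x̃ᵢ,…,x̃_{d-1}) : x̃ ∈ P_{d-1,even}}. -/
open Finset

/-- Insertion of a zero at position `i`, as a linear map. -/
noncomputable def insLin {n : ℕ} (i : Fin (n + 1)) : (Fin n → ℝ) →ₗ[ℝ] (Fin (n + 1) → ℝ) where
  toFun xt := i.insertNth (0 : ℝ) xt
  map_add' p q := by
    refine Fin.insertNth_eq_iff.2 ⟨by simp, ?_⟩
    ext j; simp [Fin.removeNth]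
  map_smul' c p := by
    show Fin.insertNth (α := fun _ => ℝ) i 0 (c • p) = c • Fin.insertNth (α := fun _ => ℝ) i 0 p
    refine Fin.insertNth_eq_iff.2 ⟨by simp, ?_⟩
    ext j; simp [Fin.removeNth]

lemma vertex_slice (n : ℕ) (i : Fin (n + 1)) :
    {v ∈ {x : Fin (n+1) → ℝ | ∃ S : Finset (Fin (n+1)), Even S.card ∧
        ∀ k, x k = if k ∈ S then 1 else 0} | v i = 0} =
      (fun xt : Fin n → ℝ => i.insertNth (0 : ℝ) xt) ''
        {x | ∃ S : Finset (Fin n), Even S.card ∧ ∀ k, x k = if k ∈ S then 1 else 0} := by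
  ext v
  constructor
  · rintro ⟨⟨T, hT, hvT⟩, hvi⟩
    have hiT : i ∉ T := by
      intro h
      have := hvT i
      rw [hvi, if_pos h] at this
      norm_num at this
    set S : Finset (Fin n) := T.preimage i.succAbove
      (Fin.succAbove_right_injective.injOn) with hS
    have hmap : S.map (i.succAboveEmb) = T := by
      ext k
      simp only [Finset.mem_map, hS, Finset.mem_preimage, Fin.succAboveEmb_apply]
      constructor
      · rintro ⟨j, hj, rfl⟩; exact hj
      · intro hk
        have hki : k ≠ i := fun h => hiT (h ▸ hk)
        obtain ⟨j, rfl⟩ := Fin.exists_succAbove_eq hki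
        exact ⟨j, hk, rfl⟩
    refine ⟨i.removeNth v, ⟨S, ?_, ?_⟩, ?_⟩
    · have : S.card = T.card := by rw [← hmap, Finset.card_map]
      rwa [this]
    · intro j
      simp only [Fin.removeNth, hvT (i.succAbove j), hS, Finset.mem_preimage]
    · rw [← hvi]; exact Fin.insertNth_self_removeNth i v
  · rintro ⟨xt, ⟨S, hS, hxt⟩, rfl⟩
    refine ⟨⟨S.map i.succAboveEmb, by rwa [Finset.card_map], ?_⟩, by simp⟩
    intro k
    rcases eq_or_ne k i with h | hki
    · subst h
      simp only [Fin.insertNth_apply_same]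
      rw [if_neg]
      simp only [Finset.mem_map, Fin.succAboveEmb_apply]
      rintro ⟨j, -, hj⟩
      exact Fin.succAbove_ne _ j hj
    · obtain ⟨j, rfl⟩ := Fin.exists_succAbove_eq hki
      simp only [Fin.insertNth_apply_succAbove, hxt j]
      congr 1
      simp [Finset.mem_map, Fin.succAbove_right_injective.eq_iff]

theorem even_polytope_slice_zero (n : ℕ) (hn : 1 ≤ n) (i : Fin (n + 1)) :
    {x ∈ PEven (n + 1) | x i = 0} =
      (fun xt : Fin n → ℝ => i.insertNth (0 : ℝ) xt) '' PEven n := by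
  set F : Set (Fin (n + 1) → ℝ) :=
    {v ∈ {x : Fin (n+1) → ℝ | ∃ S : Finset (Fin (n+1)), Even S.card ∧
        ∀ k, x k = if k ∈ S then 1 else 0} | v i = 0} with hF
  have hRHS : (fun xt : Fin n → ℝ => i.insertNth (0 : ℝ) xt) '' PEven n = convexHull ℝ F := by
    rw [hF, vertex_slice n i, PEven]
    exact ((insLin i).image_convexHull _)
  rw [hRHS]
  refine Set.Subset.antisymm ?_ (convexHull_min ?_ ?_)
  · rintro x ⟨hx, hxi⟩
    rw [PEven, _root_.convexHull_eq] at hx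
    obtain ⟨ι, t, w, z, hw0, hw1, hz, rfl⟩ := hx
    have hzi : ∀ j ∈ t, 0 ≤ z j i := by
      intro j hj
      obtain ⟨S, -, hS⟩ := hz j hj
      rw [hS i]; split <;> norm_num
    have hx0 : ∑ j ∈ t, w j * z j i = 0 := by
      have h1 : (t.centerMass w z) i = ∑ j ∈ t, w j * z j i := by
        simp [Finset.centerMass, hw1, Finset.sum_apply]
      rw [← h1]; exact hxi
    have hzero : ∀ j ∈ t, w j * z j i = 0 :=
      (Finset.sum_eq_zero_iff_of_nonneg
        (fun j hj => mul_nonneg (hw0 j hj) (hzi j hj))).1 hx0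
    have hmass : (t.filter fun j => w j ≠ 0).centerMass w z = t.centerMass w z :=
      Finset.centerMass_filter_ne_zero z
    rw [← hmass]
    refine Finset.centerMass_mem_convexHull _ (fun j hj => hw0 j (Finset.mem_filter.1 hj).1)
      ?_ ?_
    · rw [Finset.sum_filter_ne_zero, hw1]; exact one_pos
    · intro j hj
      obtain ⟨hjt, hwj⟩ := Finset.mem_filter.1 hj
      refine ⟨hz j hjt, ?_⟩
      rcases mul_eq_zero.1 (hzero j hjt) with h | h
      · exact absurd h hwj
      · exact h
  · rintro v ⟨hv, hvi⟩
    exact ⟨subset_convexHull ℝ _ hv, hvi⟩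
  · have h1 : Convex ℝ (PEven (n + 1)) := convex_convexHull ℝ _
    have h2 : Convex ℝ {x : Fin (n+1) → ℝ | x i = 0} := by
      exact convex_hyperplane (𝕜 := ℝ)
        ((LinearMap.proj (R := ℝ) (φ := fun _ : Fin (n+1) => ℝ) i)).isLinear 0
    exact h1.inter h2
end

section
/- Let z = Π_{P_{d,even}}(x) be the Euclidean projection of x ∈ ℝ^d onto the even parity polytope, and suppose zᵢ = 1 for some index i. Then the vector (z₁,…,z_{i-1},z_{i+1},…,z_d) is the Euclidean projection of (x₁,…,x_{i-1},x_{i+1},…,x_d) onto the odd parity polytope P_{d-1,odd}. -/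
open Finset

/-- Restriction of the face `z i = 1` of `PEven` lies in `POdd`. -/
lemma restrict_mem_POdd {n : ℕ} (i : Fin (n + 1)) (z : Fin (n + 1) → ℝ)
    (hz : z ∈ PEven (n + 1)) (hzi : z i = 1) :
    (fun j => z (i.succAbove j)) ∈ POdd n := by
  rw [PEven, _root_.convexHull_eq] at hz
  obtain ⟨ι, t, w, f, hw0, hw1, hmem, hcm⟩ := hz
  rw [Finset.centerMass_eq_of_sum_1 _ _ hw1] at hcm
  have hpt : ∀ m, z m = ∑ j ∈ t, w j * f j m := by
    intro m
    rw [← hcm]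
    simp [Finset.sum_apply]
  -- every coordinate of every vertex is at most 1 and nonneg
  have hle1 : ∀ j ∈ t, ∀ m, f j m ≤ 1 := by
    intro j hj m
    obtain ⟨S, _, hS⟩ := hmem j hj
    rw [hS m]
    split <;> norm_num
  -- vertices with nonzero weight have `f j i = 1`
  have hkey : ∀ j ∈ t, w j ≠ 0 → f j i = 1 := by
    have hsum0 : ∑ j ∈ t, w j * (1 - f j i) = 0 := by
      have := hpt i
      rw [hzi] at this
      calc ∑ j ∈ t, w j * (1 - f j i) = (∑ j ∈ t, w j) - ∑ j ∈ t, w j * f j i := by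
            rw [← Finset.sum_sub_distrib]; congr 1; ext j; ring
        _ = 0 := by rw [hw1, ← this]; ring
    have h0 := (Finset.sum_eq_zero_iff_of_nonneg ?_).mp hsum0
    · intro j hj hwj
      have := h0 j hj
      rcases mul_eq_zero.mp this with h | h
      · exact absurd h hwj
      · linarith
    · intro j hj
      exact mul_nonneg (hw0 j hj) (by linarith [hle1 j hj i])
  classical
  set t' := t.filter (fun j => w j ≠ 0) with ht'
  have hw1' : ∑ j ∈ t', w j = 1 := by
    rw [ht', Finset.sum_filter_of_ne (fun x _ h => h), hw1]
  have hcm' : t'.centerMass w (fun j => (fun k => f j (i.succAbove k)))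
      = (fun j => z (i.succAbove j)) := by
    rw [Finset.centerMass_eq_of_sum_1 _ _ hw1']
    funext k
    rw [hpt (i.succAbove k)]
    simp only [Finset.sum_apply, Pi.smul_apply, smul_eq_mul]
    rw [ht', Finset.sum_filter_of_ne]
    intro j _ h hwj
    simp [hwj] at h
  rw [← hcm', POdd]
  apply Finset.centerMass_mem_convexHull
  · intro j hj; exact hw0 j (Finset.mem_filter.mp hj).1
  · rw [hw1']; norm_num
  · intro j hj
    obtain ⟨hjt, hwj⟩ := Finset.mem_filter.mp hj
    obtain ⟨S, hSeven, hS⟩ := hmem j hjt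
    have hiS : i ∈ S := by
      have h1 := hkey j hjt hwj
      rw [hS i] at h1
      by_contra h
      simp [h] at h1
    refine ⟨Finset.univ.filter (fun k => i.succAbove k ∈ S), ?_, ?_⟩
    · have hmap : (Finset.univ.filter (fun k => i.succAbove k ∈ S)).map
          ⟨i.succAbove, Fin.succAbove_right_injective⟩ = S.erase i := by
        ext b
        simp only [Finset.mem_map, Finset.mem_filter, Finset.mem_univ, true_and,
          Finset.mem_erase, Function.Embedding.coeFn_mk]
        constructor
        · rintro ⟨k, hk, rfl⟩
          exact ⟨Fin.succAbove_ne i k, hk⟩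
        · rintro ⟨hb, hbS⟩
          obtain ⟨k, hk⟩ := Fin.exists_succAbove_eq hb
          exact ⟨k, hk ▸ hbS, hk⟩
      have hcard : (Finset.univ.filter (fun k => i.succAbove k ∈ S)).card = S.card - 1 := by
        rw [← Finset.card_map ⟨i.succAbove, Fin.succAbove_right_injective⟩, hmap,
          Finset.card_erase_of_mem hiS]
      rw [hcard]
      exact Nat.Even.sub_odd (Finset.card_pos.mpr ⟨i, hiS⟩) hSeven odd_one
    · intro k
      simp [hS (i.succAbove k)]
/-- Inserting a `1` into a member of `POdd` gives a member of `PEven`. -/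
lemma insert_mem_PEven {n : ℕ} (i : Fin (n + 1)) (y : Fin n → ℝ) (hy : y ∈ POdd n) :
    Fin.insertNth (α := fun _ => ℝ) i 1 y ∈ PEven (n + 1) := by
  classical
  rw [POdd, _root_.convexHull_eq] at hy
  obtain ⟨ι, t, w, f, hw0, hw1, hmem, hcm⟩ := hy
  rw [Finset.centerMass_eq_of_sum_1 _ _ hw1] at hcm
  have hpt : ∀ m, y m = ∑ j ∈ t, w j * f j m := by
    intro m
    rw [← hcm]
    simp [Finset.sum_apply]
  have hcm' : t.centerMass w (fun j => Fin.insertNth (α := fun _ => ℝ) i 1 (f j)) = Fin.insertNth (α := fun _ => ℝ) i 1 y := by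
    rw [Finset.centerMass_eq_of_sum_1 _ _ hw1]
    funext m
    simp only [Finset.sum_apply, Pi.smul_apply, smul_eq_mul]
    rcases eq_or_ne m i with rfl | hne
    · have h : ∀ j ∈ t, w j * Fin.insertNth (α := fun _ => ℝ) m 1 (f j) m = w j := by
        intro j _; rw [Fin.insertNth_apply_same]; ring
      rw [Finset.sum_congr rfl h, hw1, Fin.insertNth_apply_same]
    · obtain ⟨k, rfl⟩ := Fin.exists_succAbove_eq hne
      have h : ∀ j ∈ t, w j * Fin.insertNth (α := fun _ => ℝ) i 1 (f j) (i.succAbove k)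
          = w j * f j k := by
        intro j _; rw [Fin.insertNth_apply_succAbove]
      rw [Finset.sum_congr rfl h, Fin.insertNth_apply_succAbove, hpt k]
  rw [← hcm', PEven]
  apply Finset.centerMass_mem_convexHull _ hw0 (by rw [hw1]; norm_num)
  intro j hj
  obtain ⟨T, hTodd, hT⟩ := hmem j hj
  refine ⟨insert i (T.map ⟨i.succAbove, Fin.succAbove_right_injective⟩), ?_, ?_⟩
  · have hni : i ∉ T.map ⟨i.succAbove, Fin.succAbove_right_injective⟩ := by
      simp only [Finset.mem_map, Function.Embedding.coeFn_mk]
      rintro ⟨k, _, hk⟩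
      exact Fin.succAbove_ne i k hk
    rw [Finset.card_insert_of_notMem hni, Finset.card_map]
    exact Odd.add_one hTodd
  · intro m
    rcases eq_or_ne m i with rfl | hne
    · simp [Fin.insertNth_apply_same]
    · obtain ⟨k, rfl⟩ := Fin.exists_succAbove_eq hne
      rw [Fin.insertNth_apply_succAbove, hT k]
      have : i.succAbove k ∈ insert i (T.map ⟨i.succAbove, Fin.succAbove_right_injective⟩) ↔ k ∈ T := by
        simp only [Finset.mem_insert, Finset.mem_map, Function.Embedding.coeFn_mk]
        constructor
        · rintro (h | ⟨k', hk', hk⟩)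
          · exact absurd h (Fin.succAbove_ne i k)
          · rwa [← Fin.succAbove_right_injective hk]
        · intro h; exact Or.inr ⟨k, h, rfl⟩
      simp only [this]

theorem projection_recursion_even_one (n : ℕ) (x z : Fin (n + 1) → ℝ)
    (hz : IsProj (PEven (n + 1)) x z) (i : Fin (n + 1)) (hzi : z i = 1) :
    IsProj (POdd n) (fun j => x (i.succAbove j)) (fun j => z (i.succAbove j)) := by
  obtain ⟨hzmem, hzmin⟩ := hz
  constructor
  · exact restrict_mem_POdd i z hzmem hzi
  · intro y hy
    have hymem := insert_mem_PEven i y hy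
    have hle := hzmin _ hymem
    have hdz : sqdist x z = (x i - 1) ^ 2 + sqdist (fun j => x (i.succAbove j)) (fun j => z (i.succAbove j)) := by
      rw [sqdist, Fin.sum_univ_succAbove _ i, hzi, sqdist]
    have hdy : sqdist x (Fin.insertNth (α := fun _ => ℝ) i 1 y) = (x i - 1) ^ 2 + sqdist (fun j => x (i.succAbove j)) y := by
      rw [sqdist, Fin.sum_univ_succAbove _ i, Fin.insertNth_apply_same, sqdist]
      congr 1
      apply Finset.sum_congr rfl
      intro k _
      rw [Fin.insertNth_apply_succAbove]
    rw [hdz, hdy] at hle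
    linarith
end

section
/- Fix V ⊆ {1,…,d} with d ≥ 2, θ ∈ {±1}^d with θⱼ = 1 iff j ∈ V, and p = |V| - 1. For x ∈ ℝ^d let v = x - ((θᵀx - p)/d)·θ. Suppose there is exactly one index i with vᵢ > 1 and θᵢ = 1, and remove coordinate i, setting θ̃ and x̃ to be θ and x with the i-th coordinate deleted and p̃ = p - 1. Let ṽ = x̃ - ((θ̃ᵀx̃ - p̃)/(d-1))·θ̃. Then for every remaining index j: if θⱼ = 1 then ṽⱼ = vⱼ + (vᵢ - 1)/(d - 1) > vⱼ, and if θⱼ = -1 then ṽⱼ = vⱼ - (vᵢ - 1)/(d - 1) < vⱼ. -/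
open Finset

theorem movement_after_fixing_one (n : ℕ) (hn : 1 ≤ n) (V : Finset (Fin (n + 1)))
    (θ : Fin (n + 1) → ℝ) (hθ : ∀ j, θ j = if j ∈ V then 1 else -1)
    (p : ℝ) (hp : p = (V.card : ℝ) - 1)
    (x v : Fin (n + 1) → ℝ)
    (hv : v = fun j => x j - ((∑ k, θ k * x k - p) / ((n : ℝ) + 1)) * θ j)
    (i : Fin (n + 1)) (hvi : 1 < v i) (hθi : θ i = 1)
    (huniq : ∀ j, 1 < v j ∧ θ j = 1 → j = i)
    (vt : Fin n → ℝ)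
    (hvt : vt = fun j => x (i.succAbove j) -
      ((∑ k, θ (i.succAbove k) * x (i.succAbove k) - (p - 1)) / (n : ℝ)) *
        θ (i.succAbove j)) :
    ∀ j : Fin n,
      (θ (i.succAbove j) = 1 →
        vt j = v (i.succAbove j) + (v i - 1) / (n : ℝ) ∧ v (i.succAbove j) < vt j) ∧
      (θ (i.succAbove j) = -1 →
        vt j = v (i.succAbove j) - (v i - 1) / (n : ℝ) ∧ vt j < v (i.succAbove j)) := by
  have hn0 : (n : ℝ) ≠ 0 := Nat.cast_ne_zero.mpr (by omega)
  have hn1 : (n : ℝ) + 1 ≠ 0 := by positivity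
  have hS : ∑ k, θ k * x k =
      θ i * x i + ∑ k : Fin n, θ (i.succAbove k) * x (i.succAbove k) :=
    Fin.sum_univ_succAbove (fun k => θ k * x k) i
  have hpos : 0 < (v i - 1) / (n : ℝ) := by
    apply div_pos (by linarith) (by positivity)
  intro j
  have hvj : v (i.succAbove j) = x (i.succAbove j) -
      ((∑ k, θ k * x k - p) / ((n : ℝ) + 1)) * θ (i.succAbove j) := by rw [hv]
  have hvi' : v i = x i - ((∑ k, θ k * x k - p) / ((n : ℝ) + 1)) * θ i := by rw [hv]
  have hvtj : vt j = x (i.succAbove j) -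
      ((∑ k, θ (i.succAbove k) * x (i.succAbove k) - (p - 1)) / (n : ℝ)) *
        θ (i.succAbove j) := by rw [hvt]
  constructor <;> intro hθj
  · have key : vt j = v (i.succAbove j) + (v i - 1) / (n : ℝ) := by
      rw [hvtj, hvj, hvi', hθj, hθi, hS, hθi]
      field_simp
      ring
    exact ⟨key, by rw [key]; linarith⟩
  · have key : vt j = v (i.succAbove j) - (v i - 1) / (n : ℝ) := by
      rw [hvtj, hvj, hvi', hθj, hθi, hS, hθi]
      field_simp
      ring
    exact ⟨key, by rw [key]; linarith⟩
end

section
/- Fix V ⊆ {1,…,d} with d ≥ 2, θ ∈ {±1}^d with θⱼ = 1 iff j ∈ V, and p = |V| - 1. For x ∈ ℝ^d let v = x - ((θᵀx - p)/d)·θ. Suppose there is an index i with vᵢ < 0 and θᵢ = -1; remove coordinate i, with θ̃, x̃ the restrictions and p̃ = p. Let ṽ = x̃ - ((θ̃ᵀx̃ - p̃)/(d-1))·θ̃. Then for every remaining index j: if θⱼ = 1 then ṽⱼ = vⱼ - vᵢ/(d - 1) > vⱼ, and if θⱼ = -1 then ṽⱼ = vⱼ + vᵢ/(d - 1) < vⱼ.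 -/
open Finset

theorem movement_after_fixing_zero (n : ℕ) (hn : 1 ≤ n) (V : Finset (Fin (n + 1)))
    (θ : Fin (n + 1) → ℝ) (hθ : ∀ j, θ j = if j ∈ V then 1 else -1)
    (p : ℝ) (hp : p = (V.card : ℝ) - 1)
    (x v : Fin (n + 1) → ℝ)
    (hv : v = fun j => x j - ((∑ k, θ k * x k - p) / ((n : ℝ) + 1)) * θ j)
    (i : Fin (n + 1)) (hvi : v i < 0) (hθi : θ i = -1)
    (vt : Fin n → ℝ)
    (hvt : vt = fun j => x (i.succAbove j) -
      ((∑ k, θ (i.succAbove k) * x (i.succAbove k) - p) / (n : ℝ)) *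
        θ (i.succAbove j)) :
    ∀ j : Fin n,
      (θ (i.succAbove j) = 1 →
        vt j = v (i.succAbove j) - v i / (n : ℝ) ∧ v (i.succAbove j) < vt j) ∧
      (θ (i.succAbove j) = -1 →
        vt j = v (i.succAbove j) + v i / (n : ℝ) ∧ vt j < v (i.succAbove j)) := by
  intro j
  have hn0 : (n : ℝ) ≠ 0 := by
    have : (0:ℝ) < n := by exact_mod_cast hn
    linarith
  have hsum : ∑ k, θ (i.succAbove k) * x (i.succAbove k)
      = (∑ k, θ k * x k) - θ i * x i := by
    rw [Fin.sum_univ_succAbove (fun k => θ k * x k) i]; ring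
  have key : vt j = v (i.succAbove j) - (v i / (n : ℝ)) * θ (i.succAbove j) := by
    subst hv hvt
    simp only [hsum, hθi]
    field_simp
    ring
  have hvin : v i / (n : ℝ) < 0 := by
    apply div_neg_of_neg_of_pos hvi
    exact_mod_cast hn
  constructor
  · intro h1
    rw [key, h1]
    constructor
    · ring
    · nlinarith
  · intro h1
    rw [key, h1]
    constructor
    · ring
    · nlinarith
end
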